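/- arXiv:2006.14076 — 7 statements merged into one kernel-verified Lean document; each statement's English description precedes it below -/
import Mathlib

section
/- Let w ∈ ℝ^n, b ∈ ℝ, L, U ∈ ℝ^n with L < U, and let S = {(x,y) ∈ [L,U] × ℝ : y = max(0, w·x + b)}. For any pair (I,h) with I ⊆ [n], h ∈ [n]\I, ℓ(I) ≥ 0, ℓ(I ∪ {h}) < 0, and w_i ≠ 0 for all i ∈ I, the inequality y ≤ Σ_{i∈I} w_i(x_i − L̆_i) + (ℓ(I)/(Ŭ_h − L̆_h))·(x_h − L̆_h) is valid for all (x,y) ∈ S (and hence for all points in the convex hull of S). -/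
/-- validity of the upper-bounding inequalities indexed by pairs `(I,h)`
for the ReLU graph `S` over a box, and hence for its convex hull. -/
theorem stmt3 (n : ℕ) (w L U : Fin n → ℝ) (b : ℝ)
    (hLU : ∀ i, L i < U i)
    (Lb Ub : Fin n → ℝ)
    (hLb : ∀ i, Lb i = if 0 ≤ w i then L i else U i)
    (hUb : ∀ i, Ub i = if 0 ≤ w i then U i else L i)
    (ell : Finset (Fin n) → ℝ)
    (hell : ∀ I, ell I = ∑ i ∈ I, w i * Lb i + ∑ i ∈ Iᶜ, w i * Ub i + b)
    (I : Finset (Fin n)) (h : Fin n) (hhI : h ∉ I)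
    (hI : 0 ≤ ell I) (hIh : ell (insert h I) < 0)
    (hw : ∀ i ∈ I, w i ≠ 0) :
    (∀ p ∈ {p : (Fin n → ℝ) × ℝ |
        (∀ i, L i ≤ p.1 i ∧ p.1 i ≤ U i) ∧ p.2 = max 0 (∑ i, w i * p.1 i + b)},
      p.2 ≤ ∑ i ∈ I, w i * (p.1 i - Lb i) + ell I / (Ub h - Lb h) * (p.1 h - Lb h)) ∧
    ∀ p ∈ convexHull ℝ {p : (Fin n → ℝ) × ℝ |
        (∀ i, L i ≤ p.1 i ∧ p.1 i ≤ U i) ∧ p.2 = max 0 (∑ i, w i * p.1 i + b)},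
      p.2 ≤ ∑ i ∈ I, w i * (p.1 i - Lb i) + ell I / (Ub h - Lb h) * (p.1 h - Lb h) := by
  classical
  set d : ℝ := Ub h - Lb h with hd
  set c : ℝ := ell I / d with hcdef
  have hhc : h ∈ Iᶜ := Finset.mem_compl.mpr hhI
  have hins : ell (insert h I) = ell I - w h * d := by
    rw [hell, hell, Finset.sum_insert hhI, Finset.compl_insert,
      ← Finset.add_sum_erase Iᶜ _ hhc, hd]
    ring
  have hwhd : 0 < w h * d := by rw [hins] at hIh; linarith
  have hdne : d ≠ 0 := by
    intro h0; rw [h0, mul_zero] at hwhd; exact lt_irrefl _ hwhd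
  have hd2 : (0:ℝ) < d ^ 2 := by positivity
  have hvalid : ∀ p ∈ {p : (Fin n → ℝ) × ℝ |
        (∀ i, L i ≤ p.1 i ∧ p.1 i ≤ U i) ∧ p.2 = max 0 (∑ i, w i * p.1 i + b)},
      p.2 ≤ ∑ i ∈ I, w i * (p.1 i - Lb i) + c * (p.1 h - Lb h) := by
    rintro ⟨x, y⟩ ⟨hx, hy⟩
    simp only at hx hy ⊢
    have hbox : ∀ i, w i * Lb i ≤ w i * x i ∧ w i * x i ≤ w i * Ub i := by
      intro i
      rcases le_or_gt 0 (w i) with hwi | hwi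
      · rw [hLb i, hUb i, if_pos hwi, if_pos hwi]
        exact ⟨mul_le_mul_of_nonneg_left (hx i).1 hwi,
               mul_le_mul_of_nonneg_left (hx i).2 hwi⟩
      · rw [hLb i, hUb i, if_neg (not_le.mpr hwi), if_neg (not_le.mpr hwi)]
        constructor <;> nlinarith [(hx i).1, (hx i).2]
    set s : ℝ := x h - Lb h with hs
    have hsd : 0 ≤ s * d := by
      rcases le_or_gt 0 (w h) with hwh | hwh
      · have h1 : Lb h = L h := by rw [hLb h, if_pos hwh]
        have h2 : Ub h = U h := by rw [hUb h, if_pos hwh]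
        have hsv : s = x h - L h := by rw [hs, h1]
        have hdv : d = U h - L h := by rw [hd, h1, h2]
        nlinarith [(hx h).1, (hx h).2, hLU h]
      · have h1 : Lb h = U h := by rw [hLb h, if_neg (not_le.mpr hwh)]
        have h2 : Ub h = L h := by rw [hUb h, if_neg (not_le.mpr hwh)]
        have hsv : s = x h - U h := by rw [hs, h1]
        have hdv : d = L h - U h := by rw [hd, h1, h2]
        nlinarith [(hx h).1, (hx h).2, hLU h]
    have hds : 0 ≤ (d - s) * d := by
      rcases le_or_gt 0 (w h) with hwh | hwh
      · have h1 : Lb h = L h := by rw [hLb h, if_pos hwh]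
        have h2 : Ub h = U h := by rw [hUb h, if_pos hwh]
        have hsv : s = x h - L h := by rw [hs, h1]
        have hdv : d = U h - L h := by rw [hd, h1, h2]
        nlinarith [(hx h).1, (hx h).2, hLU h]
      · have h1 : Lb h = U h := by rw [hLb h, if_neg (not_le.mpr hwh)]
        have h2 : Ub h = L h := by rw [hUb h, if_neg (not_le.mpr hwh)]
        have hsv : s = x h - U h := by rw [hs, h1]
        have hdv : d = L h - U h := by rw [hd, h1, h2]
        nlinarith [(hx h).1, (hx h).2, hLU h]
    have hcs_eq : c * s = ell I * s * d / d ^ 2 := by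
      rw [hcdef]; field_simp
    have hcs_nonneg : 0 ≤ c * s := by
      rw [hcs_eq]
      apply div_nonneg _ (le_of_lt hd2)
      nlinarith [mul_nonneg hI hsd]
    have hkey2 : ell I - w h * (d - s) ≤ c * s := by
      rw [hcs_eq, ← sub_nonneg]
      have hsub : (0:ℝ) ≤ w h * d - ell I := by rw [hins] at hIh; linarith
      have hmain : (0:ℝ) ≤ (d - s) * d * (w h * d - ell I) :=
        mul_nonneg hds hsub
      have hfrac : ell I * s * d / d ^ 2 - (ell I - w h * (d - s))
          = (d - s) * d * (w h * d - ell I) / d ^ 2 := by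
        field_simp; ring
      rw [hfrac]
      positivity
    rw [hy]
    apply max_le
    · apply add_nonneg
      · exact Finset.sum_nonneg fun i _ => by nlinarith [(hbox i).1]
      · exact hcs_nonneg
    · have hsplit : ∑ i, w i * x i
          = ∑ i ∈ I, w i * x i + (w h * x h + ∑ i ∈ Iᶜ.erase h, w i * x i) := by
        rw [← Finset.sum_add_sum_compl I, ← Finset.add_sum_erase Iᶜ _ hhc]
      have hbnd : ∑ i ∈ Iᶜ.erase h, w i * x i ≤ ∑ i ∈ Iᶜ.erase h, w i * Ub i :=
        Finset.sum_le_sum fun i _ => (hbox i).2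
      have hellI : ell I
          = ∑ i ∈ I, w i * Lb i + (w h * Ub h + ∑ i ∈ Iᶜ.erase h, w i * Ub i) + b := by
        rw [hell, ← Finset.add_sum_erase Iᶜ _ hhc]
      have hsum_sub : ∑ i ∈ I, w i * (x i - Lb i)
          = ∑ i ∈ I, w i * x i - ∑ i ∈ I, w i * Lb i := by
        rw [← Finset.sum_sub_distrib]
        exact Finset.sum_congr rfl fun i _ => by ring
      have hds_eq : w h * (d - s) = w h * Ub h - w h * x h := by rw [hd, hs]; ring
      linarith [hkey2]
  have hlin : IsLinearMap ℝ (fun p : (Fin n → ℝ) × ℝ =>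
      p.2 - (∑ i ∈ I, w i * p.1 i) - c * p.1 h) := by
    constructor
    · intro p q
      simp only [Prod.fst_add, Prod.snd_add, Pi.add_apply, mul_add,
        Finset.sum_add_distrib]
      ring
    · intro a p
      simp only [Prod.smul_fst, Prod.smul_snd, Pi.smul_apply, smul_eq_mul]
      rw [show ∑ i ∈ I, w i * (a * p.1 i) = a * ∑ i ∈ I, w i * p.1 i by
        rw [Finset.mul_sum]; exact Finset.sum_congr rfl fun i _ => by ring]
      ring
  have hsetEq : {p : (Fin n → ℝ) × ℝ |
        p.2 ≤ ∑ i ∈ I, w i * (p.1 i - Lb i) + c * (p.1 h - Lb h)}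
      = {p : (Fin n → ℝ) × ℝ | p.2 - (∑ i ∈ I, w i * p.1 i) - c * p.1 h
          ≤ -(∑ i ∈ I, w i * Lb i) - c * Lb h} := by
    ext p
    simp only [Set.mem_setOf_eq]
    rw [show ∑ i ∈ I, w i * (p.1 i - Lb i)
        = ∑ i ∈ I, w i * p.1 i - ∑ i ∈ I, w i * Lb i by
      rw [← Finset.sum_sub_distrib]
      exact Finset.sum_congr rfl fun i _ => by ring]
    constructor <;> intro <;> linarith
  have hconv : Convex ℝ {p : (Fin n → ℝ) × ℝ |
      p.2 ≤ ∑ i ∈ I, w i * (p.1 i - Lb i) + c * (p.1 h - Lb h)} := by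
    rw [hsetEq]
    exact convex_halfSpace_le hlin _
  exact ⟨hvalid, fun p hp => convexHull_min hvalid hconv hp⟩
end

section
/- Let d ≥ 1, w ∈ ℝ^d, b ∈ ℝ with b < 0 and Σ_{i=1}^d w_i + b ≥ 0. Call an edge of the hypercube {0,1}^d a pair (u,v) with u,v ∈ {0,1}^d differing in exactly one coordinate; say the hyperplane w·x + b = 0 cuts the edge (u,v) if w·u + b < 0 and w·v + b ≥ 0. Then the number of edges of {0,1}^d cut by the hyperplane is at least d. -/
/-!
Walk from `0` to `1` along the `d` cyclic monotone paths of the cube: path `i` switches on the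
coordinates `i, i + 1, …, i + d - 1` in turn. Each path starts outside and ends inside the
half-space, so it has a crossing edge. The crossing edge of path `i` switches on coordinate
`i + k` at a vertex with `k` ones, so `i` can be read off the edge and the `d` crossing edges
are distinct.
-/

open Finset

section CyclicArc

variable {d : ℕ}

/-- Indicator of the cyclic interval `{i, i + 1, …, i + k - 1}` of `Fin d`. -/
def cyclicArc (i : Fin d) (k : ℕ) : Fin d → Bool :=
  fun j => decide ((j - i).val < k)

@[simp]
lemma cyclicArc_zero (i : Fin d) : cyclicArc i 0 = fun _ => false := by
  funext j
  simp [cyclicArc]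

lemma cyclicArc_of_le {k : ℕ} (i : Fin d) (hk : d ≤ k) : cyclicArc i k = fun _ => true := by
  funext j
  simpa [cyclicArc] using (j - i).is_lt.trans_le hk

lemma cyclicArc_ne_cyclicArc_succ_iff (i j : Fin d) (k : ℕ) :
    cyclicArc i k j ≠ cyclicArc i (k + 1) j ↔ (j - i).val = k := by
  simp only [cyclicArc, ne_eq, decide_eq_decide]
  omega

variable [NeZero d]

lemma card_cyclicArc {k : ℕ} (i : Fin d) (hk : k ≤ d) : #{j | cyclicArc i k j} = k := by
  have : #{j | cyclicArc i k j} = #{j : Fin d | j.val < k} :=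
    card_equiv (Equiv.subRight i) (by simp [cyclicArc])
  rw [this, Fin.card_filter_val_lt, min_eq_right hk]

lemma existsUnique_cyclicArc_ne_cyclicArc_succ {k : ℕ} (i : Fin d) (hk : k < d) :
    ∃! j, cyclicArc i k j ≠ cyclicArc i (k + 1) j := by
  simp only [cyclicArc_ne_cyclicArc_succ_iff]
  refine ⟨⟨k, hk⟩ + i, by simp, fun j hj => ?_⟩
  rw [← sub_eq_iff_eq_add]
  exact Fin.ext hj

lemma eq_of_cyclicArc_step_eq {i i' : Fin d} {k k' : ℕ} (hk : k < d) (hk' : k' < d)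
    (h : (cyclicArc i k, cyclicArc i (k + 1)) = (cyclicArc i' k', cyclicArc i' (k' + 1))) :
    i = i' := by
  obtain ⟨h₀, h₁⟩ := Prod.mk.inj h
  have hkk' : k = k' := by
    rw [← card_cyclicArc i hk.le, ← card_cyclicArc i' hk'.le, h₀]
  subst hkk'
  set j : Fin d := ⟨k, hk⟩ + i
  have hj : (j - i').val = k := by
    rw [← cyclicArc_ne_cyclicArc_succ_iff, ← h₀, ← h₁, cyclicArc_ne_cyclicArc_succ_iff]
    simp [j]
  have : j - i = j - i' := Fin.ext (by simpa [j] using hj.symm)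
  exact sub_right_injective this

end CyclicArc

def crossingEdges {d : ℕ} (P : (Fin d → Bool) → Prop) : Set ((Fin d → Bool) × (Fin d → Bool)) :=
  {e | (∃! i, e.1 i ≠ e.2 i) ∧ ¬P e.1 ∧ P e.2}

lemma exists_cyclicArc_step_mem_crossingEdges {d : ℕ} [NeZero d] {P : (Fin d → Bool) → Prop}
    (h₀ : ¬P fun _ => false) (h₁ : P fun _ => true) (i : Fin d) :
    ∃ k < d, (cyclicArc i k, cyclicArc i (k + 1)) ∈ crossingEdges P := by
  obtain ⟨k, hk, hk₁⟩ := Nat.exists_not_and_succ_of_not_zero_of_exists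
    (p := fun k => P (cyclicArc i k)) (by simpa using h₀) ⟨d, by rwa [cyclicArc_of_le i le_rfl]⟩
  have hkd : k < d := by
    by_contra! hdk
    exact hk (by rwa [cyclicArc_of_le i hdk])
  exact ⟨k, hkd, existsUnique_cyclicArc_ne_cyclicArc_succ i hkd, hk, hk₁⟩

theorem le_ncard_crossingEdges {d : ℕ} {P : (Fin d → Bool) → Prop}
    (h₀ : ¬P fun _ => false) (h₁ : P fun _ => true) : d ≤ (crossingEdges P).ncard := by
  have : NeZero d := ⟨by
    rintro rfl
    exact h₀ (Subsingleton.elim (α := Fin 0 → Bool) (fun _ => true) (fun _ => false) ▸ h₁)⟩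
  choose k hkd hmem using exists_cyclicArc_step_mem_crossingEdges h₀ h₁
  have hinj : Function.Injective fun i => (cyclicArc i (k i), cyclicArc i (k i + 1)) :=
    fun i i' h => eq_of_cyclicArc_step_eq (hkd i) (hkd i') h
  calc d = Nat.card (Fin d) := (Nat.card_fin d).symm
    _ = (Set.range _).ncard := (Nat.card_range_of_injective hinj).symm
    _ ≤ _ := Set.ncard_le_ncard (Set.range_subset_iff.mpr hmem) (Set.toFinite _)

theorem stmt4_general (d : ℕ) (w : Fin d → ℝ) (b : ℝ)
    (hb : b < 0) (hwb : 0 ≤ ∑ i, w i + b) :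
    d ≤ Set.ncard {e : (Fin d → Bool) × (Fin d → Bool) |
      (∃! i, e.1 i ≠ e.2 i) ∧
      (∑ i, w i * (if e.1 i then 1 else 0)) + b < 0 ∧
      0 ≤ (∑ i, w i * (if e.2 i then 1 else 0)) + b} := by
  simpa only [crossingEdges, not_le] using
    le_ncard_crossingEdges (P := fun x => 0 ≤ (∑ i, w i * (if x i then 1 else 0)) + b)
      (by simpa using hb) (by simpa using hwb)

/-- a hyperplane `w·x + b = 0` with `b < 0 ≤ Σ w + b` cuts at least `d`
edges of the hypercube `{0,1}^d`. -/
theorem stmt4 (d : ℕ) (hd : 1 ≤ d) (w : Fin d → ℝ) (b : ℝ)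
    (hb : b < 0) (hwb : 0 ≤ ∑ i, w i + b) :
    d ≤ Set.ncard {e : (Fin d → Bool) × (Fin d → Bool) |
      (∃! i, e.1 i ≠ e.2 i) ∧
      (∑ i, w i * (if e.1 i then 1 else 0)) + b < 0 ∧
      0 ≤ (∑ i, w i * (if e.2 i then 1 else 0)) + b} :=
  stmt4_general d w b hb hwb
end

section
/- Let n ≥ 1, w ∈ ℝ_+^n, and −Σ_i w_i ≤ b < 0. Let f(x) = w·x + b and g(x) = max(0, f(x)) on [0,1]^n. For a permutation π of [n], let T_π = {x ∈ ℝ^n : 1 ≥ x_{π(1)} ≥ x_{π(2)} ≥ … ≥ x_{π(n)} ≥ 0}, and let r_π be the unique affine function agreeing with g on the n+1 vertices v_j = Σ_{i=1}^j e(π(i)), j = 0,…,n, of T_π. Then r_π is a linear function (r_π(0) = 0), and there exist a set I ⊆ [n] and an index h ∉ I with F(I) ≥ 0 and F(I ∪ {h}) < 0 such that r_π(x) = F(I)·x_h + Σ_{i∈I} w_i x_i, where F(J) = Σ_{i∉J} w_i + b. -/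
/-!
Consecutive vertices `v_m, v_{m+1}` of the Kuhn simplex differ only in the coordinate `π m`, so
the affine interpolant of `g` has constant term `g 0` and coefficient `g v_{m+1} - g v_m` at
`π m`. For `g = max 0 f` the values `f v_j = ∑_{i among the first j} w i + b` increase from
`b < 0` to `∑ w + b ≥ 0`, so they change sign once, between some `v_k` and `v_{k+1}`. The
increments of `g` are therefore `0` before `k`, `f v_{k+1} = F(I)` at `k` and `w (π m)` after
`k`, with `h = π k` and `I = {π m | m > k}`.
-/

open Finset

section KuhnSimplex

variable {n : ℕ}

-- `{π 0, …, π (j - 1)}`: the support of the vertex `v_j` of the paper, whose `π` is 1-based.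
def kuhnPrefix (π : Equiv.Perm (Fin n)) (j : ℕ) : Finset (Fin n) :=
  univ.filter fun i => (π.symm i : ℕ) < j

def kuhnVertex {R : Type*} [Zero R] [One R] (π : Equiv.Perm (Fin n)) (j : ℕ) : Fin n → R :=
  fun i => if i ∈ kuhnPrefix π j then 1 else 0

section kuhnPrefix

variable (π : Equiv.Perm (Fin n))

@[simp]
lemma mem_kuhnPrefix {i : Fin n} {j : ℕ} : i ∈ kuhnPrefix π j ↔ (π.symm i : ℕ) < j := by
  simp [kuhnPrefix]

@[simp]
lemma kuhnPrefix_zero : kuhnPrefix π 0 = ∅ := by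
  ext; simp

lemma kuhnPrefix_of_le {j : ℕ} (h : n ≤ j) : kuhnPrefix π j = univ := by
  ext i; simpa using (π.symm i).isLt.trans_le h

lemma kuhnPrefix_mono : Monotone (kuhnPrefix π) := fun _ _ h _ hi => by
  simp only [mem_kuhnPrefix] at hi ⊢; omega

lemma apply_notMem_kuhnPrefix (m : Fin n) : π m ∉ kuhnPrefix π m := by
  simp

lemma kuhnPrefix_succ (m : Fin n) : kuhnPrefix π (m + 1) = insert (π m) (kuhnPrefix π m) := by
  ext i
  simp only [mem_kuhnPrefix, mem_insert, ← Equiv.symm_apply_eq, Fin.ext_iff]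
  omega

lemma insert_compl_kuhnPrefix_succ (m : Fin n) :
    insert (π m) (kuhnPrefix π (m + 1))ᶜ = (kuhnPrefix π m)ᶜ := by
  rw [kuhnPrefix_succ, compl_insert, insert_erase (mem_compl.2 (apply_notMem_kuhnPrefix π m))]

lemma sum_kuhnPrefix_succ {M : Type*} [AddCommMonoid M] (f : Fin n → M) (m : Fin n) :
    ∑ i ∈ kuhnPrefix π (m + 1), f i = f (π m) + ∑ i ∈ kuhnPrefix π m, f i := by
  rw [kuhnPrefix_succ, sum_insert (apply_notMem_kuhnPrefix π m)]

@[simp]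
lemma kuhnVertex_zero {R : Type*} [Zero R] [One R] : kuhnVertex (R := R) π 0 = 0 := by
  ext; simp [kuhnVertex]

lemma sum_mul_kuhnVertex {R : Type*} [Semiring R] (a : Fin n → R) (j : ℕ) :
    ∑ i, a i * kuhnVertex π j i = ∑ i ∈ kuhnPrefix π j, a i := by
  simp only [kuhnVertex, mul_ite, mul_one, mul_zero, sum_ite_mem_eq]

end kuhnPrefix

section interpolation

variable {R : Type*} [Ring R] (π : Equiv.Perm (Fin n)) {r g : (Fin n → R) → R} {a : Fin n → R}
  {c : R}

lemma const_eq_of_interpolates (hr : ∀ x, r x = ∑ i, a i * x i + c)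
    (hg : r (kuhnVertex π 0) = g (kuhnVertex π 0)) : c = g 0 := by
  simpa [hr, sum_mul_kuhnVertex] using hg

lemma coeff_eq_of_interpolates (hr : ∀ x, r x = ∑ i, a i * x i + c)
    (hg : ∀ j ≤ n, r (kuhnVertex π j) = g (kuhnVertex π j)) (m : Fin n) :
    a (π m) = g (kuhnVertex π (m + 1)) - g (kuhnVertex π m) := by
  rw [← hg _ m.isLt, ← hg _ m.isLt.le, hr, hr, sum_mul_kuhnVertex, sum_mul_kuhnVertex,
    sum_kuhnPrefix_succ]
  abel

end interpolation

section hinge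

variable {α : Type*} [AddGroup α] [LinearOrder α] {S : ℕ → α} {k m : ℕ}

lemma max_zero_sub_max_zero_of_lt (hS : Monotone S) (hk : S k < 0) (hm : m < k) :
    max 0 (S (m + 1)) - max 0 (S m) = 0 := by
  rw [max_eq_left ((hS hm).trans hk.le), max_eq_left ((hS hm.le).trans hk.le), sub_zero]

lemma max_zero_sub_max_zero_of_gt (hS : Monotone S) (hk : 0 ≤ S (k + 1)) (hm : k < m) :
    max 0 (S (m + 1)) - max 0 (S m) = S (m + 1) - S m := by
  rw [max_eq_right (hk.trans (hS hm)), max_eq_right (hk.trans (hS (by omega)))]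

lemma Monotone.exists_sign_change (hS : Monotone S) {n : ℕ} (h0 : S 0 < 0) (hn : 0 ≤ S n) :
    ∃ k < n, S k < 0 ∧ 0 ≤ S (k + 1) := by
  obtain ⟨k, hk, hk1⟩ := Nat.exists_not_and_succ_of_not_zero_of_exists (p := fun j => 0 ≤ S j)
    h0.not_ge ⟨n, hn⟩
  rw [not_le] at hk
  exact ⟨k, lt_of_not_ge fun h => (hn.trans (hS h)).not_gt hk, hk, hk1⟩

end hinge

lemma sum_mul_eq_of_kuhnPrefix {R : Type*} [Semiring R] (π : Equiv.Perm (Fin n)) (k : Fin n)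
    {a w x : Fin n → R} (hlow : ∀ m : Fin n, m < k → a (π m) = 0)
    (hhigh : ∀ m : Fin n, k < m → a (π m) = w (π m)) :
    ∑ i, a i * x i = a (π k) * x (π k) + ∑ i ∈ (kuhnPrefix π (k + 1))ᶜ, w i * x i := by
  rw [← sum_add_sum_compl (kuhnPrefix π (k + 1)), sum_kuhnPrefix_succ, sum_eq_zero, add_zero]
  · refine congrArg _ (sum_congr rfl fun i hi => ?_)
    rw [mem_compl, mem_kuhnPrefix, not_lt] at hi
    rw [← π.apply_symm_apply i, hhigh _ hi]
  · intro i hi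
    rw [← π.apply_symm_apply i, hlow _ ((mem_kuhnPrefix π).1 hi), zero_mul]

end KuhnSimplex

theorem stmt8_general (n : ℕ) (w : Fin n → ℝ) (hw : ∀ i, 0 ≤ w i) (b : ℝ)
    (hb1 : -∑ i, w i ≤ b) (hb2 : b < 0)
    (π : Equiv.Perm (Fin n))
    (v : ℕ → Fin n → ℝ)
    (hv : ∀ j i, v j i = if ((π.symm i : Fin n) : ℕ) < j then 1 else 0)
    (r : (Fin n → ℝ) → ℝ) (a : Fin n → ℝ) (c : ℝ)
    (hr : ∀ x, r x = ∑ i, a i * x i + c)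
    (hint : ∀ j : ℕ, j ≤ n → r (v j) = max 0 (∑ i, w i * v j i + b)) :
    r (fun _ => 0) = 0 ∧
    ∃ (I : Finset (Fin n)) (h : Fin n), h ∉ I ∧
      0 ≤ (∑ i ∈ Iᶜ, w i) + b ∧ (∑ i ∈ (insert h I)ᶜ, w i) + b < 0 ∧
      ∀ x : Fin n → ℝ, r x = ((∑ i ∈ Iᶜ, w i) + b) * x h + ∑ i ∈ I, w i * x i := by
  obtain rfl : v = kuhnVertex π := by
    ext j i; simp [hv, kuhnVertex]
  set S : ℕ → ℝ := fun j => ∑ i ∈ kuhnPrefix π j, w i + b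
  have hS : Monotone S := fun j j' h =>
    add_le_add_left (sum_le_sum_of_subset_of_nonneg (kuhnPrefix_mono π h) fun i _ _ => hw i) b
  set g : (Fin n → ℝ) → ℝ := fun x => max 0 (∑ i, w i * x i + b)
  have hc : c = 0 := by
    rw [const_eq_of_interpolates π (g := g) hr (hint 0 (Nat.zero_le n))]
    simpa [g] using hb2.le
  have hSn : 0 ≤ S n := by
    simp only [S, kuhnPrefix_of_le π le_rfl]
    linarith
  obtain ⟨k, hkn, hk, hk1⟩ := hS.exists_sign_change (by simpa [S] using hb2) hSn
  have ha (m : Fin n) : a (π m) = max 0 (S (m + 1)) - max 0 (S m) := by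
    simpa [g, sum_mul_kuhnVertex] using coeff_eq_of_interpolates π (g := g) hr hint m
  have hlow (m : Fin n) (hm : m < ⟨k, hkn⟩) : a (π m) = 0 := by
    rw [ha, max_zero_sub_max_zero_of_lt hS hk hm]
  have hhigh (m : Fin n) (hm : ⟨k, hkn⟩ < m) : a (π m) = w (π m) := by
    rw [ha, max_zero_sub_max_zero_of_gt hS hk1 hm]
    simp only [S, sum_kuhnPrefix_succ]
    ring
  refine ⟨by simp [hr, hc], (kuhnPrefix π (k + 1))ᶜ, π ⟨k, hkn⟩, by simp, by simpa using hk1, ?_,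
    fun x => ?_⟩
  · rw [insert_compl_kuhnPrefix_succ]
    simpa using hk
  · rw [hr, hc, add_zero, sum_mul_eq_of_kuhnPrefix π ⟨k, hkn⟩ hlow hhigh, ha, max_eq_left hk.le,
      max_eq_right hk1, compl_compl, sub_zero]

/-- the affine interpolant `r_π` of `g(x) = max(0, w·x + b)` on the Kuhn
simplex `T_π` is linear and has the form `r_{I,h}(x) = F(I)·x_h + Σ_{i∈I} w_i x_i`
for some pair `(I,h)` with `F(I) ≥ 0 > F(I∪{h})`, where `F(J) = Σ_{i∉J} w_i + b`. -/
theorem stmt8 (n : ℕ) (hn : 1 ≤ n) (w : Fin n → ℝ) (hw : ∀ i, 0 ≤ w i) (b : ℝ)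
    (hb1 : -∑ i, w i ≤ b) (hb2 : b < 0)
    (π : Equiv.Perm (Fin n))
    (v : ℕ → Fin n → ℝ)
    (hv : ∀ j i, v j i = if ((π.symm i : Fin n) : ℕ) < j then 1 else 0)
    (r : (Fin n → ℝ) → ℝ) (a : Fin n → ℝ) (c : ℝ)
    (hr : ∀ x, r x = ∑ i, a i * x i + c)
    (hint : ∀ j : ℕ, j ≤ n → r (v j) = max 0 (∑ i, w i * v j i + b)) :
    r (fun _ => 0) = 0 ∧
    ∃ (I : Finset (Fin n)) (h : Fin n), h ∉ I ∧
      0 ≤ (∑ i ∈ Iᶜ, w i) + b ∧ (∑ i ∈ (insert h I)ᶜ, w i) + b < 0 ∧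
      ∀ x : Fin n → ℝ, r x = ((∑ i ∈ Iᶜ, w i) + b) * x h + ∑ i ∈ I, w i * x i :=
  stmt8_general n w hw b hb1 hb2 π v hv r a c hr hint
end

section
/- Consider n = 2, w = (1,1), b = −1.5, and the set S = {(x,y) ∈ [0,1]^2 × ℝ : y = max(0, x_1 + x_2 − 1.5)}. Then the convex hull of S equals {(x,y) : x ∈ [0,1]^2, y ≥ max(0, x_1 + x_2 − 1.5), y ≤ 0.5·x_2, y ≤ 0.5·x_1}. -/
/-!
The hull lies between the graph of `g = reluNeuron` and that of `min r₁ r₂`: the region between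
them is convex, since `g` is convex and `min r₁ r₂` concave, and contains the graph, since
`g ≤ min r₁ r₂` on the square. Conversely, each vertical fibre of that region is the segment
from `(x, g x)`, on the graph, to `(x, min r₁ r₂ x)`, and the latter is a convex combination of the
three graph points over the vertices of the Kuhn triangle containing `x`.
-/

open Set

section ConvexGeometry

variable {𝕜 E : Type*} [Field 𝕜] [LinearOrder 𝕜] [IsStrictOrderedRing 𝕜] [AddCommGroup E]
  [Module 𝕜 E]

theorem Convex.smul_add_smul_add_smul_mem {s : Set E} (hs : Convex 𝕜 s) {x y z : E}
    (hx : x ∈ s) (hy : y ∈ s) (hz : z ∈ s) {a b c : 𝕜} (ha : 0 ≤ a) (hb : 0 ≤ b) (hc : 0 ≤ c)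
    (habc : a + b + c = 1) : a • x + b • y + c • z ∈ s := by
  simpa [Fin.sum_univ_three] using
    hs.sum_mem (t := Finset.univ) (w := ![a, b, c]) (z := ![x, y, z])
      (by simp [Fin.forall_fin_succ, ha, hb, hc]) (by simp [Fin.sum_univ_three, habc])
      (by simp [Fin.forall_fin_succ, hx, hy, hz])

theorem Prod.mk_mem_segment_of_le (x : E) {a b y : 𝕜} (ha : a ≤ y) (hb : y ≤ b) :
    (x, y) ∈ segment 𝕜 (x, a) (x, b) := by
  rw [← Prod.image_mk_segment_right, segment_eq_Icc (ha.trans hb)]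
  exact ⟨y, ⟨ha, hb⟩, rfl⟩

theorem convex_setOf_le_and_le {s : Set E} {f g : E → 𝕜} (hf : ConvexOn 𝕜 s f)
    (hg : ConcaveOn 𝕜 s g) : Convex 𝕜 {p : E × 𝕜 | p.1 ∈ s ∧ f p.1 ≤ p.2 ∧ p.2 ≤ g p.1} := by
  convert hf.convex_epigraph.inter hg.convex_hypograph using 1
  ext p
  simp only [mem_ofPred_eq, mem_inter_iff]
  tauto

end ConvexGeometry

def reluNeuron (x : Fin 2 → ℝ) : ℝ := max 0 (x 0 + x 1 - 1.5)

/-- `min r₁ r₂`, with `r₁ = 0.5 * x 1` and `r₂ = 0.5 * x 0` (coordinates indexed from `0`, not from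
`1` as in the paper). -/
def kuhnUpperBound (x : Fin 2 → ℝ) : ℝ := min (0.5 * x 1) (0.5 * x 0)

def reluGraph : Set ((Fin 2 → ℝ) × ℝ) := {p | p.1 ∈ Icc 0 1 ∧ p.2 = reluNeuron p.1}

theorem convexOn_reluNeuron : ConvexOn ℝ (Icc 0 1) reluNeuron := by
  have hlin := ((LinearMap.proj (R := ℝ) (φ := fun _ : Fin 2 => ℝ) 0 + LinearMap.proj 1).convexOn
    (convex_Icc 0 1)).add_const (-1.5)
  refine (convexOn_const 0 (convex_Icc 0 1)).sup (hlin.congr fun x _ => ?_)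
  simp only [Pi.add_apply, LinearMap.add_apply, LinearMap.coe_proj, Function.eval]
  ring

theorem concaveOn_kuhnUpperBound : ConcaveOn ℝ (Icc 0 1) kuhnUpperBound :=
  (((LinearMap.proj 1).concaveOn (convex_Icc 0 1)).smul (by norm_num)).inf
    (((LinearMap.proj 0).concaveOn (convex_Icc 0 1)).smul (by norm_num))

theorem reluNeuron_le_kuhnUpperBound {x : Fin 2 → ℝ} (hx : x ∈ Icc 0 1) :
    reluNeuron x ≤ kuhnUpperBound x := by
  have h0 : 0 ≤ x 0 := hx.1 0
  have h1 : 0 ≤ x 1 := hx.1 1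
  have h0' : x 0 ≤ 1 := hx.2 0
  have h1' : x 1 ≤ 1 := hx.2 1
  simp only [reluNeuron, kuhnUpperBound, max_le_iff, le_min_iff]
  refine ⟨⟨?_, ?_⟩, ?_, ?_⟩ <;> linarith

theorem zero_mem_reluGraph : (0, 0) ∈ reluGraph :=
  ⟨left_mem_Icc.2 zero_le_one, by norm_num [reluNeuron]⟩

theorem one_half_mem_reluGraph : ((1 : Fin 2 → ℝ), (0.5 : ℝ)) ∈ reluGraph :=
  ⟨right_mem_Icc.2 zero_le_one, by norm_num [reluNeuron]⟩

theorem single_zero_mem_reluGraph (i : Fin 2) :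
    ((Pi.single i 1 : Fin 2 → ℝ), (0 : ℝ)) ∈ reluGraph :=
  ⟨by constructor <;> intro j <;> by_cases h : j = i <;> simp [h],
    by fin_cases i <;> simp [reluNeuron] <;> norm_num⟩

/-- On the Kuhn triangle `x i ≤ x j` the point `(x, x i / 2)` is the convex combination
`(1 - x j) • (0, 0) + (x j - x i) • (e j, 0) + x i • (1, 1/2)` of its vertices on the graph. -/
theorem mk_half_mem_convexHull_reluGraph {x : Fin 2 → ℝ} {i j : Fin 2} (hij : i ≠ j)
    (hi : 0 ≤ x i) (hle : x i ≤ x j) (hj : x j ≤ 1) :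
    (x, 0.5 * x i) ∈ convexHull ℝ reluGraph := by
  have hcomb : (x, 0.5 * x i) = (1 - x j) • ((0 : Fin 2 → ℝ), (0 : ℝ)) +
      (x j - x i) • ((Pi.single j 1 : Fin 2 → ℝ), (0 : ℝ)) +
      x i • ((1 : Fin 2 → ℝ), (0.5 : ℝ)) := by
    refine Prod.ext (funext fun k => ?_) ?_
    · rcases eq_or_ne k j with rfl | hk
      · simp
      · obtain rfl : k = i := by omega
        simp [hk]
    · simp only [Prod.snd_add, Prod.smul_snd, smul_eq_mul]
      ring
  rw [hcomb]
  have mem := subset_convexHull ℝ reluGraph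
  exact (convex_convexHull ℝ reluGraph).smul_add_smul_add_smul_mem (mem zero_mem_reluGraph)
    (mem (single_zero_mem_reluGraph j)) (mem one_half_mem_reluGraph) (by linarith)
    (by linarith) hi (by ring)

theorem mk_kuhnUpperBound_mem_convexHull {x : Fin 2 → ℝ} (hx : x ∈ Icc 0 1) :
    (x, kuhnUpperBound x) ∈ convexHull ℝ reluGraph := by
  rcases le_total (x 0) (x 1) with h | h
  · rw [kuhnUpperBound, min_eq_right (by linarith)]
    exact mk_half_mem_convexHull_reluGraph (by decide) (hx.1 0) h (hx.2 1)
  · rw [kuhnUpperBound, min_eq_left (by linarith)]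
    exact mk_half_mem_convexHull_reluGraph (by decide) (hx.1 1) h (hx.2 0)

theorem convexHull_reluGraph :
    convexHull ℝ reluGraph =
      {p | p.1 ∈ Icc 0 1 ∧ reluNeuron p.1 ≤ p.2 ∧ p.2 ≤ kuhnUpperBound p.1} := by
  refine Subset.antisymm ?_ ?_
  · refine convexHull_min ?_ (convex_setOf_le_and_le convexOn_reluNeuron concaveOn_kuhnUpperBound)
    rintro p ⟨hp, hp'⟩
    exact ⟨hp, hp'.ge, hp' ▸ reluNeuron_le_kuhnUpperBound hp⟩
  · rintro ⟨x, y⟩ ⟨hx, hlow, hup⟩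
    have hgraph : (x, reluNeuron x) ∈ reluGraph := ⟨hx, rfl⟩
    exact (convex_convexHull ℝ _).segment_subset (subset_convexHull ℝ _ hgraph)
      (mk_kuhnUpperBound_mem_convexHull hx) (Prod.mk_mem_segment_of_le x hlow hup)

/-- explicit convex hull of the ReLU graph
`y = max(0, x₁ + x₂ − 1.5)` over `[0,1]²`. -/
theorem stmt10 :
    convexHull ℝ {p : (Fin 2 → ℝ) × ℝ |
        (∀ i, 0 ≤ p.1 i ∧ p.1 i ≤ 1) ∧ p.2 = max 0 (p.1 0 + p.1 1 - 1.5)} =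
      {p : (Fin 2 → ℝ) × ℝ |
        (∀ i, 0 ≤ p.1 i ∧ p.1 i ≤ 1) ∧ max 0 (p.1 0 + p.1 1 - 1.5) ≤ p.2 ∧
          p.2 ≤ 0.5 * p.1 1 ∧ p.2 ≤ 0.5 * p.1 0} := by
  simpa only [reluGraph, reluNeuron, kuhnUpperBound, le_min_iff, mem_Icc, Pi.le_def,
    Pi.zero_apply, Pi.one_apply, ← forall_and] using convexHull_reluGraph
end

section
/- Let h : [0,1]^n → ℝ be of the form h(x) = −ρ(w·x + b) with ρ convex, w ∈ ℝ_+^n, b ∈ ℝ, and suppose Q = {(x,y) ∈ [0,1]^n × ℝ : y = ρ(w·x + b)}. Then conv(Q) = {(x,y) ∈ [0,1]^n × ℝ : g(x) ≤ y ≤ min_π r_π(x)}, where g(x) = ρ(w·x+b), the minimum is over all permutations π of [n], and r_π is the unique affine interpolant of g on the simplex T_π of the Kuhn triangulation (agreeing with g at the n+1 vertices Σ_{i≤j} e(π(i)), j = 0,…,n). -/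
theorem four_pt (ρ : ℝ → ℝ) (hρ : ConvexOn ℝ Set.univ ρ) {t s d : ℝ} (hts : t ≤ s) (hd : 0 ≤ d) :
    ρ (t + d) - ρ t ≤ ρ (s + d) - ρ s := by
  rcases le_or_gt (s + d) t with h | h
  · have hst : s = t := le_antisymm (by linarith) hts
    have hd0 : d = 0 := by linarith
    simp [hst, hd0]
  · set δ := s + d - t with hδ
    have hδ0 : 0 < δ := by linarith
    set α := (s - t) / δ with hα
    have hα0 : 0 ≤ α := div_nonneg (by linarith) hδ0.le
    have hα1 : α ≤ 1 := by
      rw [hα, div_le_one hδ0]; linarith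
    have hsum : α + (1 - α) = 1 := by ring
    have h1 := hρ.2 (Set.mem_univ t) (Set.mem_univ (s + d)) hα0 (by linarith) hsum
    have h2 := hρ.2 (Set.mem_univ t) (Set.mem_univ (s + d)) (by linarith : (0:ℝ) ≤ 1 - α)
      hα0 (by ring)
    have e1 : α • t + (1 - α) • (s + d) = t + d := by
      simp only [smul_eq_mul, hα]
      field_simp
      ring
    have e2 : (1 - α) • t + α • (s + d) = s := by
      simp only [smul_eq_mul, hα]
      field_simp
      ring
    rw [e1] at h1; rw [e2] at h2
    simp only [smul_eq_mul] at h1 h2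
    nlinarith [h1, h2]



theorem stmt12_step (ρ : ℝ → ℝ) (hρ : ConvexOn ℝ Set.univ ρ)
    (four_pt : ∀ {t s d : ℝ}, t ≤ s → 0 ≤ d → ρ (t + d) - ρ t ≤ ρ (s + d) - ρ s)
    {u t d θ : ℝ} (hut : u ≤ t) (hd : 0 ≤ d) (hθ0 : 0 ≤ θ) (hθ1 : θ ≤ 1) :
    ρ (u + d * θ) ≤ ρ u + (ρ (t + d) - ρ t) * θ := by
  have h1 := hρ.2 (Set.mem_univ u) (Set.mem_univ (u + d)) (by linarith : (0:ℝ) ≤ 1 - θ) hθ0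
    (by ring)
  have e : (1 - θ) • u + θ • (u + d) = u + d * θ := by simp only [smul_eq_mul]; ring
  rw [e] at h1
  simp only [smul_eq_mul] at h1
  have h2 := four_pt hut hd
  nlinarith [mul_le_mul_of_nonneg_left h2 hθ0]

theorem stmt12_perm_sum {M : Type*} [AddCommMonoid M] (n : ℕ) (π : Equiv.Perm (Fin n))
    (f : Fin n → M) :
    ∑ i, f i = ∑ k ∈ Finset.range n, if h : k < n then f (π ⟨k, h⟩) else 0 := by
  rw [← Fin.sum_univ_eq_sum_range (fun k => if h : k < n then f (π ⟨k, h⟩) else 0) n]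
  rw [← Equiv.sum_comp π f]
  apply Finset.sum_congr rfl
  intro k _
  simp [k.isLt, Fin.eta]

theorem stmt12_affcomb (n : ℕ) (a : Fin n → ℝ) (c : ℝ) (x y : Fin n → ℝ) (s t : ℝ)
    (hst : s + t = 1) :
    ∑ i, a i * (s * x i + t * y i) + c
      = s * ((∑ i, a i * x i) + c) + t * ((∑ i, a i * y i) + c) := by
  have h : ∑ i, a i * (s * x i + t * y i)
      = ∑ i, (s * (a i * x i) + t * (a i * y i)) := by
    apply Finset.sum_congr rfl; intros; ring
  rw [h, Finset.sum_add_distrib, ← Finset.mul_sum, ← Finset.mul_sum]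
  linear_combination (-c) * hst



theorem stmt12_lemA (n : ℕ) (w : Fin n → ℝ) (hw : ∀ i, 0 ≤ w i) (b : ℝ)
    (ρ : ℝ → ℝ) (hρ : ConvexOn ℝ Set.univ ρ)
    (four_pt : ∀ {t s d : ℝ}, t ≤ s → 0 ≤ d → ρ (t + d) - ρ t ≤ ρ (s + d) - ρ s)
    (step : ∀ {u t d θ : ℝ}, u ≤ t → 0 ≤ d → 0 ≤ θ → θ ≤ 1 →
      ρ (u + d * θ) ≤ ρ u + (ρ (t + d) - ρ t) * θ)
    (perm_sum : ∀ (π : Equiv.Perm (Fin n)) (f : Fin n → ℝ),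
      ∑ i, f i = ∑ k ∈ Finset.range n, if h : k < n then f (π ⟨k, h⟩) else 0)
    (v : Equiv.Perm (Fin n) → ℕ → Fin n → ℝ)
    (hv : ∀ π j i, v π j i = if ((π.symm i : Fin n) : ℕ) < j then 1 else 0)
    (r : Equiv.Perm (Fin n) → (Fin n → ℝ) → ℝ)
    (haff : ∀ π, ∃ (a : Fin n → ℝ) (c : ℝ), ∀ x, r π x = ∑ i, a i * x i + c)
    (hint : ∀ π, ∀ j : ℕ, j ≤ n → r π (v π j) = ρ (∑ i, w i * v π j i + b))
    (π : Equiv.Perm (Fin n)) (x : Fin n → ℝ) (hx : ∀ i, 0 ≤ x i ∧ x i ≤ 1) :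
    ρ ((∑ i, w i * x i) + b) ≤ r π x := by
  obtain ⟨a, c, hr⟩ := haff π
  set W' : ℕ → ℝ := fun k => if h : k < n then w (π ⟨k, h⟩) else 0 with hW'def
  set X' : ℕ → ℝ := fun k => if h : k < n then x (π ⟨k, h⟩) else 0 with hX'def
  set T : ℕ → ℝ := fun j => (∑ k ∈ Finset.range j, W' k) + b with hTdef
  have hW0 : ∀ k, 0 ≤ W' k := by
    intro k; rw [hW'def]; dsimp only; split
    · exact hw _
    · exact le_refl 0
  have hX0 : ∀ k, 0 ≤ X' k := by
    intro k; rw [hX'def]; dsimp only; split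
    · exact (hx _).1
    · exact le_refl 0
  have hX1 : ∀ k, X' k ≤ 1 := by
    intro k; rw [hX'def]; dsimp only; split
    · exact (hx _).2
    · norm_num
  -- the linear form evaluated at vertices
  have hvL : ∀ j, j ≤ n → (∑ i, w i * v π j i) = ∑ k ∈ Finset.range j, W' k := by
    intro j hj
    have h1 : ∀ i : Fin n, w i * v π j i
        = if ((π.symm i : Fin n) : ℕ) < j then w i else 0 := by
      intro i; rw [hv]; split <;> simp
    rw [Finset.sum_congr rfl (fun i _ => h1 i)]
    rw [perm_sum π (fun i => if ((π.symm i : Fin n) : ℕ) < j then w i else 0)]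
    rw [← Finset.sum_subset (Finset.range_subset_range.2 hj)
      (f := fun k => if h : k < n then
        (if ((π.symm (π ⟨k, h⟩) : Fin n) : ℕ) < j then w (π ⟨k, h⟩) else 0) else 0)]
    · apply Finset.sum_congr rfl
      intro k hk
      have hkj : k < j := Finset.mem_range.1 hk
      have hkn : k < n := lt_of_lt_of_le hkj hj
      rw [dif_pos hkn, hW'def]
      simp [hkn, hkj]
    · intro k hk hknot
      have hkn : k < n := Finset.mem_range.1 hk
      have hkj : ¬ k < j := fun h => hknot (Finset.mem_range.2 h)
      rw [dif_pos hkn]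
      simp [hkj]
  have hF : ∀ j, j ≤ n → r π (v π j) = ρ (T j) := by
    intro j hj; rw [hint π j hj, hvL j hj]
  have hc : c = ρ b := by
    have h0 : r π (v π 0) = c := by
      rw [hr]
      have : ∀ i : Fin n, a i * v π 0 i = 0 := by
        intro i; rw [hv]; simp
      rw [Finset.sum_congr rfl (fun i _ => this i)]
      simp
    have h1 := hF 0 (Nat.zero_le n)
    rw [h0] at h1
    simpa [hTdef] using h1
  have ha : ∀ k (hk : k < n), a (π ⟨k, hk⟩) = ρ (T (k + 1)) - ρ (T k) := by
    intro k hk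
    have e1 := hF (k + 1) hk
    have e2 := hF k hk.le
    rw [hr] at e1 e2
    have key : (∑ i, a i * v π (k+1) i) - (∑ i, a i * v π k i) = a (π ⟨k, hk⟩) := by
      rw [← Finset.sum_sub_distrib]
      have : ∀ i : Fin n, a i * v π (k+1) i - a i * v π k i
          = if i = π ⟨k, hk⟩ then a i else 0 := by
        intro i
        rw [hv, hv]
        by_cases hik : i = π ⟨k, hk⟩
        · have hs : π.symm i = ⟨k, hk⟩ := by rw [hik]; simp
          rw [if_pos hik, hs]
          simp
        · rw [if_neg hik]
          have hm : ((π.symm i : Fin n) : ℕ) ≠ k := by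
            intro h
            exact hik (by rw [← Fin.ext h (b := (⟨k, hk⟩ : Fin n))] ; exact (π.apply_symm_apply i).symm)
          rcases lt_or_gt_of_ne hm with h | h
          · rw [if_pos (Nat.lt_succ_of_lt h), if_pos h]; ring
          · rw [if_neg (by omega), if_neg (by omega)]; ring
      rw [Finset.sum_congr rfl (fun i _ => this i)]
      exact Finset.sum_ite_eq' Finset.univ (π ⟨k, hk⟩) a ▸ by simp
    have : (∑ i, a i * v π (k+1) i) - (∑ i, a i * v π k i) = ρ (T (k+1)) - ρ (T k) := by
      linarith [e1, e2]
    linarith [key, this]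
  -- main induction
  have hUT : ∀ m, ∑ k ∈ Finset.range m, W' k * X' k ≤ ∑ k ∈ Finset.range m, W' k := by
    intro m
    apply Finset.sum_le_sum
    intro k _
    calc W' k * X' k ≤ W' k * 1 := mul_le_mul_of_nonneg_left (hX1 k) (hW0 k)
      _ = W' k := mul_one _
  have key : ∀ m, m ≤ n →
      ρ ((∑ k ∈ Finset.range m, W' k * X' k) + b)
        ≤ ρ b + ∑ k ∈ Finset.range m, (ρ (T (k+1)) - ρ (T k)) * X' k := by
    intro m
    induction m with
    | zero => simp
    | succ m ih =>
      intro hm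
      have ihm := ih (Nat.le_of_succ_le hm)
      rw [Finset.sum_range_succ, Finset.sum_range_succ]
      have hst : T (m+1) = T m + W' m := by
        rw [hTdef]; dsimp only; rw [Finset.sum_range_succ]; ring
      have hut : (∑ k ∈ Finset.range m, W' k * X' k) + b ≤ T m := by
        rw [hTdef]; dsimp only; linarith [hUT m]
      have hstep := step hut (hW0 m) (hX0 m) (hX1 m)
      rw [← hst] at hstep
      have e : (∑ k ∈ Finset.range m, W' k * X' k) + W' m * X' m + b
          = ((∑ k ∈ Finset.range m, W' k * X' k) + b) + W' m * X' m := by ring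
      rw [e]
      linarith [hstep, ihm]
  -- conclude
  have hxw : (∑ i, w i * x i) = ∑ k ∈ Finset.range n, W' k * X' k := by
    rw [perm_sum π (fun i => w i * x i)]
    apply Finset.sum_congr rfl
    intro k hk
    have hkn : k < n := Finset.mem_range.1 hk
    rw [dif_pos hkn, hW'def, hX'def]
    simp [hkn]
  have hax : (∑ i, a i * x i) = ∑ k ∈ Finset.range n, (ρ (T (k+1)) - ρ (T k)) * X' k := by
    rw [perm_sum π (fun i => a i * x i)]
    apply Finset.sum_congr rfl
    intro k hk
    have hkn : k < n := Finset.mem_range.1 hk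
    rw [dif_pos hkn, ha k hkn, hX'def]
    simp [hkn]
  rw [hr, hxw, hax, hc]
  linarith [key n le_rfl]



theorem stmt12_main (n : ℕ) (w : Fin n → ℝ) (hw : ∀ i, 0 ≤ w i) (b : ℝ)
    (ρ : ℝ → ℝ) (hρ : ConvexOn ℝ Set.univ ρ)
    (affcomb : ∀ (a : Fin n → ℝ) (c : ℝ) (x y : Fin n → ℝ) (s t : ℝ), s + t = 1 →
      ∑ i, a i * (s * x i + t * y i) + c
        = s * ((∑ i, a i * x i) + c) + t * ((∑ i, a i * y i) + c))
    (v : Equiv.Perm (Fin n) → ℕ → Fin n → ℝ)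
    (hv : ∀ π j i, v π j i = if ((π.symm i : Fin n) : ℕ) < j then 1 else 0)
    (r : Equiv.Perm (Fin n) → (Fin n → ℝ) → ℝ)
    (haff : ∀ π, ∃ (a : Fin n → ℝ) (c : ℝ), ∀ x, r π x = ∑ i, a i * x i + c)
    (hint : ∀ π, ∀ j : ℕ, j ≤ n → r π (v π j) = ρ (∑ i, w i * v π j i + b))
    (lemA : ∀ (π : Equiv.Perm (Fin n)) (x : Fin n → ℝ), (∀ i, 0 ≤ x i ∧ x i ≤ 1) →
      ρ ((∑ i, w i * x i) + b) ≤ r π x) :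
    convexHull ℝ {p : (Fin n → ℝ) × ℝ |
        (∀ i, 0 ≤ p.1 i ∧ p.1 i ≤ 1) ∧ p.2 = ρ (∑ i, w i * p.1 i + b)} =
      {p : (Fin n → ℝ) × ℝ |
        (∀ i, 0 ≤ p.1 i ∧ p.1 i ≤ 1) ∧ ρ (∑ i, w i * p.1 i + b) ≤ p.2 ∧
          ∀ π, p.2 ≤ r π p.1} := by
  set Q : Set ((Fin n → ℝ) × ℝ) := {p |
      (∀ i, 0 ≤ p.1 i ∧ p.1 i ≤ 1) ∧ p.2 = ρ (∑ i, w i * p.1 i + b)} with hQdef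
  apply Set.Subset.antisymm
  · -- conv Q ⊆ RHS
    apply convexHull_min
    · rintro p ⟨hcube, hy⟩
      refine ⟨hcube, le_of_eq hy.symm, fun π => ?_⟩
      rw [hy]
      exact lemA π p.1 hcube
    · -- RHS is convex
      rintro p hp q hq s t hs ht hst
      obtain ⟨hp1, hp2, hp3⟩ := hp
      obtain ⟨hq1, hq2, hq3⟩ := hq
      have hco1 : (s • p + t • q).1 = fun i => s * p.1 i + t * q.1 i := by
        funext i
        simp [Prod.fst_add, Prod.smul_fst, Pi.add_apply, Pi.smul_apply, smul_eq_mul]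
      have hco2 : (s • p + t • q).2 = s * p.2 + t * q.2 := by
        simp [Prod.snd_add, Prod.smul_snd, smul_eq_mul]
      refine ⟨?_, ?_, ?_⟩
      · intro i
        have hg : (s • p + t • q).1 i = s * p.1 i + t * q.1 i := by rw [hco1]
        rw [hg]
        constructor
        · have := (hp1 i).1; have := (hq1 i).1
          positivity
        · have h1 := (hp1 i).2; have h2 := (hq1 i).2
          nlinarith [(hp1 i).1, (hq1 i).1]
      · rw [hco1, hco2]
        have hL : ∑ i, w i * (s * p.1 i + t * q.1 i) + b
            = s * ((∑ i, w i * p.1 i) + b) + t * ((∑ i, w i * q.1 i) + b) :=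
          affcomb w b p.1 q.1 s t hst
        dsimp only
        rw [hL]
        have hC := hρ.2 (Set.mem_univ ((∑ i, w i * p.1 i) + b))
          (Set.mem_univ ((∑ i, w i * q.1 i) + b)) hs ht hst
        simp only [smul_eq_mul] at hC
        calc ρ (s * ((∑ i, w i * p.1 i) + b) + t * ((∑ i, w i * q.1 i) + b))
            ≤ s * ρ ((∑ i, w i * p.1 i) + b) + t * ρ ((∑ i, w i * q.1 i) + b) := hC
          _ ≤ s * p.2 + t * q.2 := by
              apply add_le_add
              · exact mul_le_mul_of_nonneg_left hp2 hs
              · exact mul_le_mul_of_nonneg_left hq2 ht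
      · intro π
        obtain ⟨a, c, hr⟩ := haff π
        rw [hco1, hco2, hr]
        have hA : ∑ i, a i * (s * p.1 i + t * q.1 i) + c
            = s * ((∑ i, a i * p.1 i) + c) + t * ((∑ i, a i * q.1 i) + c) :=
          affcomb a c p.1 q.1 s t hst
        rw [hA, ← hr p.1, ← hr q.1]
        apply add_le_add
        · exact mul_le_mul_of_nonneg_left (hp3 π) hs
        · exact mul_le_mul_of_nonneg_left (hq3 π) ht
  · -- RHS ⊆ conv Q
    rintro p ⟨hcube, hlo, hhi⟩
    classical
    set x := p.1 with hxdef
    -- sorting permutation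
    set τ := Tuple.sort x with hτdef
    set σ : Equiv.Perm (Fin n) := Fin.revPerm.trans τ with hσdef
    have hmono := Tuple.monotone_sort x
    have hanti : ∀ k l : Fin n, k ≤ l → x (σ l) ≤ x (σ k) := by
      intro k l hkl
      have : Fin.rev l ≤ Fin.rev k := Fin.rev_le_rev.2 hkl
      have h2 := hmono this
      simpa [hσdef, Equiv.trans_apply, Function.comp, Fin.revPerm_apply] using h2
    set D : ℕ → ℝ := fun k => if h : k < n then x (σ ⟨k, h⟩) else 0 with hDdef
    set E : ℕ → ℝ := fun j => if j = 0 then 1 else D (j - 1) with hEdef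
    set lam : ℕ → ℝ := fun j => E j - E (j + 1) with hlamdef
    have hE0 : E 0 = 1 := by simp [hEdef]
    have hE1 : ∀ j, E (j + 1) = D j := by intro j; rw [hEdef]; simp
    have hD0 : ∀ k, 0 ≤ D k := by
      intro k; rw [hDdef]; dsimp only; split
      · exact (hcube _).1
      · exact le_refl 0
    have hD1 : ∀ k, D k ≤ 1 := by
      intro k; rw [hDdef]; dsimp only; split
      · exact (hcube _).2
      · norm_num
    have hDn : D n = 0 := by rw [hDdef]; simp
    have hDanti : ∀ k l : ℕ, k ≤ l → D l ≤ D k := by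
      intro k l hkl
      by_cases hl : l < n
      · have hk : k < n := lt_of_le_of_lt hkl hl
        rw [hDdef]; dsimp only
        rw [dif_pos hl, dif_pos hk]
        exact hanti ⟨k, hk⟩ ⟨l, hl⟩ hkl
      · rw [hDdef]; dsimp only
        rw [dif_neg hl]
        split
        · exact (hcube _).1
        · exact le_refl 0
    have hlam0 : ∀ j, 0 ≤ lam j := by
      intro j
      rw [hlamdef]; dsimp only
      cases j with
      | zero => rw [hE0, hE1]; linarith [hD1 0]
      | succ m => rw [hE1, hE1]; linarith [hDanti m (m + 1) (Nat.le_succ m)]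
    have t1 : ∀ m, ∑ j ∈ Finset.range m, lam j = E 0 - E m := by
      intro m
      rw [hlamdef]
      exact Finset.sum_range_sub' E m
    have hsum : ∑ j ∈ Finset.range (n + 1), lam j = 1 := by
      rw [t1, hE0, hE1, hDn]
      ring
    have hxdecomp : ∀ i : Fin n, ∑ j ∈ Finset.range (n + 1), lam j * v σ j i = x i := by
      intro i
      set K : ℕ := ((σ.symm i : Fin n) : ℕ) with hKdef
      have hK : K < n := (σ.symm i).isLt
      have h1 : ∀ j, lam j * v σ j i = if K < j then lam j else 0 := by
        intro j; rw [hv]; split <;> simp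
      rw [Finset.sum_congr rfl (fun j _ => h1 j)]
      have hfilter : (Finset.range (n + 1)).filter (fun j => K < j)
          = Finset.Ico (K + 1) (n + 1) := by
        ext j
        simp only [Finset.mem_filter, Finset.mem_Ico, Finset.mem_range]
        omega
      have h2 : ∑ j ∈ Finset.range (n + 1), (if K < j then lam j else 0)
          = ∑ j ∈ Finset.Ico (K + 1) (n + 1), lam j := by
        rw [← Finset.sum_filter, hfilter]
      rw [h2]
      rw [Finset.sum_Ico_eq_sub _ (by omega : K + 1 ≤ n + 1)]
      rw [t1, t1]
      rw [hE0, hE1, hE1, hDn]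
      have hDK : D K = x i := by
        have e : σ ⟨K, hK⟩ = i := by
          have e2 : (⟨K, hK⟩ : Fin n) = σ.symm i := by
            apply Fin.ext
            show K = ((σ.symm i : Fin n) : ℕ)
            exact hKdef
          rw [e2, σ.apply_symm_apply]
        rw [hDdef]; dsimp only
        rw [dif_pos hK, e]
      linarith [hDK]
    -- the points
    set z : ℕ → (Fin n → ℝ) × ℝ := fun j => (v σ j, ρ ((∑ i, w i * v σ j i) + b)) with hzdef
    have hzQ : ∀ j, z j ∈ Q := by
      intro j
      refine ⟨?_, rfl⟩
      intro i
      rw [hzdef]; dsimp only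
      rw [hv]
      split <;> norm_num
    have hcm : (Finset.range (n + 1)).centerMass lam z ∈ convexHull ℝ Q :=
      Finset.centerMass_mem_convexHull _ (fun j _ => hlam0 j)
        (by rw [hsum]; norm_num) (fun j _ => hzQ j)
    rw [Finset.centerMass_eq_of_sum_1 _ _ hsum] at hcm
    -- identify the center of mass
    obtain ⟨a, c, hr⟩ := haff σ
    have hid : (∑ j ∈ Finset.range (n + 1), lam j • z j) = (x, r σ x) := by
      apply Prod.ext
      · rw [Prod.fst_sum]
        funext i
        rw [Finset.sum_apply]
        have hj1 : ∀ j ∈ Finset.range (n + 1), (lam j • z j).1 i = lam j * v σ j i := by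
          intro j _
          rw [hzdef]
          simp [Prod.smul_fst, Pi.smul_apply, smul_eq_mul]
        rw [Finset.sum_congr rfl hj1]
        exact hxdecomp i
      · rw [Prod.snd_sum]
        have hz2 : ∀ j ∈ Finset.range (n + 1), (lam j • z j).2
            = lam j * ((∑ i, a i * v σ j i) + c) := by
          intro j hj
          have hjn : j ≤ n := by rw [Finset.mem_range] at hj; omega
          rw [hzdef]
          simp only [Prod.smul_snd, smul_eq_mul]
          rw [← hint σ j hjn, hr]
        rw [Finset.sum_congr rfl hz2]
        have expand : ∀ j, lam j * ((∑ i, a i * v σ j i) + c)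
            = (∑ i, lam j * (a i * v σ j i)) + lam j * c := by
          intro j
          rw [mul_add, Finset.mul_sum]
        rw [Finset.sum_congr rfl (fun j _ => expand j)]
        rw [Finset.sum_add_distrib]
        rw [Finset.sum_comm]
        rw [← Finset.sum_mul, hsum, one_mul]
        have inner : ∀ i : Fin n, ∑ j ∈ Finset.range (n + 1), lam j * (a i * v σ j i)
            = a i * x i := by
          intro i
          have : ∀ j, lam j * (a i * v σ j i) = a i * (lam j * v σ j i) := by
            intro j; ring
          rw [Finset.sum_congr rfl (fun j _ => this j)]
          rw [← Finset.mul_sum, hxdecomp i]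
        rw [Finset.sum_congr rfl (fun i _ => inner i)]
        rw [hr]
      -- done hid
    rw [hid] at hcm
    -- now the segment argument
    have hmem1 : ((x, ρ ((∑ i, w i * x i) + b)) : (Fin n → ℝ) × ℝ) ∈ convexHull ℝ Q :=
      subset_convexHull ℝ Q ⟨hcube, rfl⟩
    have hαβ : ρ ((∑ i, w i * x i) + b) ≤ r σ x := le_trans hlo (hhi σ)
    have hseg : p.2 ∈ segment ℝ (ρ ((∑ i, w i * x i) + b)) (r σ x) := by
      rw [segment_eq_Icc hαβ]
      exact ⟨hlo, hhi σ⟩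
    obtain ⟨u, t', hu0, ht0, hut1, hy⟩ := hseg
    have := (convex_convexHull ℝ Q) hmem1 hcm hu0 ht0 hut1
    have hfinal : u • ((x, ρ ((∑ i, w i * x i) + b)) : (Fin n → ℝ) × ℝ)
        + t' • ((x, r σ x) : (Fin n → ℝ) × ℝ) = p := by
      apply Prod.ext
      · simp only [Prod.fst_add, Prod.smul_fst]
        funext i
        simp only [Pi.add_apply, Pi.smul_apply, smul_eq_mul]
        have : u * x i + t' * x i = (u + t') * x i := by ring
        rw [this, hut1, one_mul]
      · simp only [Prod.snd_add, Prod.smul_snd]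
        exact hy
    rwa [hfinal] at this

/-- the convex hull of the graph of `g(x) = ρ(w·x+b)` (`ρ` convex,
`w ≥ 0`) over the unit cube is `{(x,y) : x ∈ [0,1]^n, g(x) ≤ y ≤ min_π r_π(x)}`,
where `r_π` is the affine interpolant of `g` at the vertices of the Kuhn simplex `T_π`. -/
theorem stmt12 (n : ℕ) (w : Fin n → ℝ) (hw : ∀ i, 0 ≤ w i) (b : ℝ)
    (ρ : ℝ → ℝ) (hρ : ConvexOn ℝ Set.univ ρ)
    (v : Equiv.Perm (Fin n) → ℕ → Fin n → ℝ)
    (hv : ∀ π j i, v π j i = if ((π.symm i : Fin n) : ℕ) < j then 1 else 0)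
    (r : Equiv.Perm (Fin n) → (Fin n → ℝ) → ℝ)
    (haff : ∀ π, ∃ (a : Fin n → ℝ) (c : ℝ), ∀ x, r π x = ∑ i, a i * x i + c)
    (hint : ∀ π, ∀ j : ℕ, j ≤ n → r π (v π j) = ρ (∑ i, w i * v π j i + b)) :
    convexHull ℝ {p : (Fin n → ℝ) × ℝ |
        (∀ i, 0 ≤ p.1 i ∧ p.1 i ≤ 1) ∧ p.2 = ρ (∑ i, w i * p.1 i + b)} =
      {p : (Fin n → ℝ) × ℝ |
        (∀ i, 0 ≤ p.1 i ∧ p.1 i ≤ 1) ∧ ρ (∑ i, w i * p.1 i + b) ≤ p.2 ∧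
          ∀ π, p.2 ≤ r π p.1} := by
  have four_pt : ∀ {t s d : ℝ}, t ≤ s → 0 ≤ d → ρ (t + d) - ρ t ≤ ρ (s + d) - ρ s :=
    fun hts hd => four_pt ρ hρ hts hd
  exact stmt12_main n w hw b ρ hρ
    (fun a c x y s t hst => stmt12_affcomb n a c x y s t hst)
    v hv r haff hint
    (fun π x hx => stmt12_lemA n w hw b ρ hρ four_pt
      (fun hut hd hθ0 hθ1 => stmt12_step ρ hρ four_pt hut hd hθ0 hθ1)
      (fun π' f => stmt12_perm_sum n π' f) v hv r haff hint π x hx)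
end

section
/- Let w ∈ ℝ^n with all w_i ≠ 0, b ∈ ℝ, L < U ∈ ℝ^n, and suppose ℓ([n]) < 0 ≤ ℓ(∅). Fix x ∈ [L,U]. Consider the linear program: minimize Σ_i w_i (x_i − L̆_i) v_i over v ∈ [0,1]^n subject to Σ_i w_i (Ŭ_i − L̆_i) v_i = Σ_i w_i Ŭ_i + b. Then this LP is feasible, and its optimal value equals the minimum over pairs (I,h) with ℓ(I) ≥ 0 and ℓ(I∪{h}) < 0 of Σ_{i∈I} w_i(x_i − L̆_i) + (ℓ(I)/(Ŭ_h − L̆_h))(x_h − L̆_h). -/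
/-!
With `a i = w i (Ŭ i - L̆ i) > 0`, `c i = w i (x i - L̆ i)` and `T = ℓ(∅)`, we have
`ℓ(I) = T - ∑_{i ∈ I} a i`, so the LP is a fractional knapsack problem and the pairs `(I, h)`
are exactly its break points. Sorting the items by the ratio `c i / a i` yields a break point
`(I, h)` with every ratio in `I` at most `θ = c h / a h` and every ratio outside `I` at least `θ`.
Subtracting `θ` times the equality constraint from the objective then shows that no feasible
point beats the value of this break point, while every break point is itself a feasible point.
-/

open Finset

noncomputable section FractionalKnapsack

variable {ι : Type*} (a c : ι → ℝ) (T : ℝ)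

def knapsackValues [Fintype ι] : Set ℝ :=
  {z | ∃ v : ι → ℝ, (∀ i, 0 ≤ v i ∧ v i ≤ 1) ∧ ∑ i, a i * v i = T ∧ z = ∑ i, c i * v i}

def IsBreakPair (I : Finset ι) (h : ι) : Prop :=
  h ∉ I ∧ ∑ i ∈ I, a i ≤ T ∧ T < ∑ i ∈ I, a i + a h

def breakFraction (I : Finset ι) (h : ι) : ℝ :=
  (T - ∑ i ∈ I, a i) / a h

def breakPoint [DecidableEq ι] (I : Finset ι) (h : ι) : ι → ℝ :=
  fun i => if i ∈ I then 1 else if i = h then breakFraction a T I h else 0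

def breakValue (I : Finset ι) (h : ι) : ℝ :=
  ∑ i ∈ I, c i + breakFraction a T I h * c h

def breakValues : Set ℝ :=
  {z | ∃ (I : Finset ι) (h : ι), IsBreakPair a T I h ∧ z = breakValue a c T I h}

variable {a c T}

lemma breakPoint_mem_unitInterval [DecidableEq ι] {I : Finset ι} {h : ι} (ha : 0 < a h)
    (hp : IsBreakPair a T I h) (i : ι) : 0 ≤ breakPoint a T I h i ∧ breakPoint a T I h i ≤ 1 := by
  obtain ⟨-, hle, hlt⟩ := hp
  unfold breakPoint breakFraction
  split_ifs
  · exact ⟨zero_le_one, le_rfl⟩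
  · exact ⟨div_nonneg (by linarith) ha.le, (div_le_one ha).2 (by linarith)⟩
  · exact ⟨le_rfl, zero_le_one⟩

lemma exists_isBreakPair_sorted [DecidableEq ι] {α : Type*} [LinearOrder α] (r : ι → α) (s : Finset ι) :
    ∀ T, 0 ≤ T → T < ∑ i ∈ s, a i → ∃ I ⊆ s, ∃ h ∈ s, IsBreakPair a T I h ∧
      (∀ i ∈ I, r i ≤ r h) ∧ ∀ i ∈ s, i ∉ I → r h ≤ r i := by
  induction s using Finset.strongInduction with
  | H s ih =>
    intro T hT0 hT
    have hs : s.Nonempty := nonempty_iff_ne_empty.2 fun hs => by simp [hs] at hT; linarith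
    obtain ⟨m, hm, hmin⟩ := exists_min_image s r hs
    by_cases hTm : T < a m
    · exact ⟨∅, empty_subset _, m, hm, ⟨notMem_empty m, by simpa using hT0, by simpa using hTm⟩,
        by simp, fun i hi _ => hmin i hi⟩
    rw [← add_sum_erase s a hm] at hT
    obtain ⟨I, hIs, h, hhs, ⟨hhI, hle, hlt⟩, hrI, hrO⟩ :=
      ih (s.erase m) (erase_ssubset hm) (T - a m) (by linarith) (by linarith)
    have hmI : m ∉ I := fun hmI => by simpa using hIs hmI
    have hhm : h ≠ m := ne_of_mem_erase hhs
    refine ⟨insert m I, insert_subset hm (hIs.trans (erase_subset m s)), h,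
      mem_of_mem_erase hhs, ⟨by simp [hhm, hhI], ?_, ?_⟩, ?_, ?_⟩
    · rw [sum_insert hmI]; linarith
    · rw [sum_insert hmI]; linarith
    · simp only [mem_insert, forall_eq_or_imp]
      exact ⟨hmin h (mem_of_mem_erase hhs), hrI⟩
    · intro i hi hiI
      rw [mem_insert, not_or] at hiI
      exact hrO i (mem_erase.2 ⟨hiI.1, hi⟩) hiI.2

variable [Fintype ι]

lemma sum_mul_breakPoint [DecidableEq ι] {I : Finset ι} {h : ι} (hh : h ∉ I) (d : ι → ℝ) :
    ∑ i, d i * breakPoint a T I h i = ∑ i ∈ I, d i + breakFraction a T I h * d h := by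
  have hzero : ∀ i ∈ univ, i ∉ insert h I → d i * breakPoint a T I h i = 0 := by
    intro i _ hi
    rw [mem_insert, not_or] at hi
    simp [breakPoint, hi.1, hi.2]
  rw [← sum_subset (subset_univ _) hzero, sum_insert hh, add_comm]
  congr 1
  · exact sum_congr rfl fun i hi => by simp [breakPoint, hi]
  · simp [breakPoint, hh, mul_comm]

lemma breakValue_mem_knapsackValues (ha : ∀ i, 0 < a i) {I : Finset ι} {h : ι}
    (hp : IsBreakPair a T I h) : breakValue a c T I h ∈ knapsackValues a c T := by
  classical
  refine ⟨breakPoint a T I h, breakPoint_mem_unitInterval (ha h) hp, ?_,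
    (sum_mul_breakPoint hp.1 c).symm⟩
  rw [sum_mul_breakPoint hp.1, breakFraction, div_mul_cancel₀ _ (ha h).ne']
  ring

lemma sum_le_sum_mul_of_nonpos_of_nonneg (I : Finset ι) {d v : ι → ℝ}
    (hI : ∀ i ∈ I, d i ≤ 0) (hO : ∀ i ∉ I, 0 ≤ d i) (hv : ∀ i, 0 ≤ v i ∧ v i ≤ 1) :
    ∑ i ∈ I, d i ≤ ∑ i, d i * v i := by
  classical
  rw [← sum_add_sum_compl I (fun i => d i * v i)]
  have hin : ∑ i ∈ I, d i ≤ ∑ i ∈ I, d i * v i :=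
    sum_le_sum fun i hi => by nlinarith [hI i hi, hv i]
  have hout : 0 ≤ ∑ i ∈ Iᶜ, d i * v i :=
    sum_nonneg fun i hi => mul_nonneg (hO i (mem_compl.1 hi)) (hv i).1
  linarith

lemma breakValue_le_of_ratio (ha : ∀ i, 0 < a i) {I : Finset ι} {h : ι}
    (hI : ∀ i ∈ I, c i / a i ≤ c h / a h) (hO : ∀ i ∉ I, c h / a h ≤ c i / a i)
    {v : ι → ℝ} (hv : ∀ i, 0 ≤ v i ∧ v i ≤ 1) (hsum : ∑ i, a i * v i = T) :
    breakValue a c T I h ≤ ∑ i, c i * v i := by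
  set θ := c h / a h
  have key := sum_le_sum_mul_of_nonpos_of_nonneg I (d := fun i => c i - θ * a i)
    (fun i hi => by have := (div_le_iff₀ (ha i)).1 (hI i hi); linarith)
    (fun i hi => by have := (le_div_iff₀ (ha i)).1 (hO i hi); linarith) hv
  have hch : c h = θ * a h := (div_mul_cancel₀ _ (ha h).ne').symm
  simp only [sub_mul, sum_sub_distrib, mul_assoc, ← mul_sum, hsum] at key
  have hfrac : breakFraction a T I h * c h = (T - ∑ i ∈ I, a i) * θ := by
    rw [breakFraction, hch]
    field_simp [(ha h).ne']
  rw [breakValue, hfrac]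
  linarith

theorem isLeast_knapsackValues_breakValues (ha : ∀ i, 0 < a i) (hT0 : 0 ≤ T)
    (hT : T < ∑ i, a i) :
    ∃ μ, IsLeast (knapsackValues a c T) μ ∧ IsLeast (breakValues a c T) μ := by
  classical
  obtain ⟨I, -, h, -, hp, hI, hO⟩ :=
    exists_isBreakPair_sorted (fun i => c i / a i) univ T hT0 hT
  have hlower : ∀ z ∈ knapsackValues a c T, breakValue a c T I h ≤ z := by
    rintro z ⟨v, hv, hsum, rfl⟩
    exact breakValue_le_of_ratio ha hI (fun i hi => hO i (mem_univ i) hi) hv hsum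
  refine ⟨_, ⟨breakValue_mem_knapsackValues ha hp, hlower⟩, ⟨I, h, hp, rfl⟩, ?_⟩
  rintro z ⟨J, k, hq, rfl⟩
  exact hlower _ (breakValue_mem_knapsackValues ha hq)

end FractionalKnapsack

theorem stmt13_general (n : ℕ) (w L U : Fin n → ℝ) (b : ℝ)
    (hw : ∀ i, w i ≠ 0) (hLU : ∀ i, L i < U i)
    (Lb Ub : Fin n → ℝ)
    (hLb : ∀ i, Lb i = if 0 ≤ w i then L i else U i)
    (hUb : ∀ i, Ub i = if 0 ≤ w i then U i else L i)
    (ell : Finset (Fin n) → ℝ)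
    (hell : ∀ I, ell I = ∑ i ∈ I, w i * Lb i + ∑ i ∈ Iᶜ, w i * Ub i + b)
    (huniv : ell Finset.univ < 0) (hempty : 0 ≤ ell ∅)
    (x : Fin n → ℝ) :
    (∃ v : Fin n → ℝ, (∀ i, 0 ≤ v i ∧ v i ≤ 1) ∧
        ∑ i, w i * (Ub i - Lb i) * v i = ∑ i, w i * Ub i + b) ∧
    ∃ μ : ℝ,
      IsLeast {c : ℝ | ∃ v : Fin n → ℝ, (∀ i, 0 ≤ v i ∧ v i ≤ 1) ∧
          (∑ i, w i * (Ub i - Lb i) * v i = ∑ i, w i * Ub i + b) ∧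
          c = ∑ i, w i * (x i - Lb i) * v i} μ ∧
      IsLeast {c : ℝ | ∃ (I : Finset (Fin n)) (h : Fin n), h ∉ I ∧
          0 ≤ ell I ∧ ell (insert h I) < 0 ∧
          c = ∑ i ∈ I, w i * (x i - Lb i) +
            ell I / (Ub h - Lb h) * (x h - Lb h)} μ := by
  set a : Fin n → ℝ := fun i => w i * (Ub i - Lb i)
  set c : Fin n → ℝ := fun i => w i * (x i - Lb i)
  set T := ∑ i, w i * Ub i + b
  have ha : ∀ i, 0 < a i := by
    intro i
    rcases (hw i).lt_or_gt with hneg | hpos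
    · simp only [a, hLb, hUb, hneg.not_ge, if_false]
      nlinarith [hLU i]
    · simp only [a, hLb, hUb, hpos.le, if_true]
      nlinarith [hLU i]
  have hell_eq : ∀ I, ell I = T - ∑ i ∈ I, a i := by
    intro I
    simp only [hell, T, a, mul_sub, sum_sub_distrib, ← sum_add_sum_compl I (fun i => w i * Ub i)]
    ring
  obtain ⟨μ, hLP, hbreak⟩ := isLeast_knapsackValues_breakValues (c := c) ha
    (by simpa [hell_eq] using hempty) (by simpa [hell_eq] using huniv)
  obtain ⟨v, hv, hsum, -⟩ := hLP.1
  refine ⟨⟨v, hv, hsum⟩, μ, hLP, ?_⟩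
  convert hbreak using 1
  ext z
  refine exists_congr fun I => exists_congr fun h => ?_
  simp only [IsBreakPair, and_assoc]
  refine and_congr_right fun hh => ?_
  have hval : ell I / (Ub h - Lb h) * (x h - Lb h) = breakFraction a T I h * c h := by
    have hUL : Ub h - Lb h ≠ 0 := right_ne_zero_of_mul (ha h).ne'
    rw [breakFraction, hell_eq]
    simp only [a, c]
    field_simp [hw h]
  rw [hval, breakValue, hell_eq, hell_eq, sum_insert hh, sub_nonneg, sub_neg, add_comm (a h)]

/-- the separation LP is feasible and its optimal value equals the minimum
over pairs `(I,h)` with `ℓ(I) ≥ 0 > ℓ(I∪{h})` of the corresponding inequality value. -/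
theorem stmt13 (n : ℕ) (w L U : Fin n → ℝ) (b : ℝ)
    (hw : ∀ i, w i ≠ 0) (hLU : ∀ i, L i < U i)
    (Lb Ub : Fin n → ℝ)
    (hLb : ∀ i, Lb i = if 0 ≤ w i then L i else U i)
    (hUb : ∀ i, Ub i = if 0 ≤ w i then U i else L i)
    (ell : Finset (Fin n) → ℝ)
    (hell : ∀ I, ell I = ∑ i ∈ I, w i * Lb i + ∑ i ∈ Iᶜ, w i * Ub i + b)
    (huniv : ell Finset.univ < 0) (hempty : 0 ≤ ell ∅)
    (x : Fin n → ℝ) (hx : ∀ i, L i ≤ x i ∧ x i ≤ U i) :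
    (∃ v : Fin n → ℝ, (∀ i, 0 ≤ v i ∧ v i ≤ 1) ∧
        ∑ i, w i * (Ub i - Lb i) * v i = ∑ i, w i * Ub i + b) ∧
    ∃ μ : ℝ,
      IsLeast {c : ℝ | ∃ v : Fin n → ℝ, (∀ i, 0 ≤ v i ∧ v i ≤ 1) ∧
          (∑ i, w i * (Ub i - Lb i) * v i = ∑ i, w i * Ub i + b) ∧
          c = ∑ i, w i * (x i - Lb i) * v i} μ ∧
      IsLeast {c : ℝ | ∃ (I : Finset (Fin n)) (h : Fin n), h ∉ I ∧
          0 ≤ ell I ∧ ell (insert h I) < 0 ∧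
          c = ∑ i ∈ I, w i * (x i - Lb i) +
            ell I / (Ub h - Lb h) * (x h - Lb h)} μ :=
  stmt13_general n w L U b hw hLU Lb Ub hLb hUb ell hell huniv hempty x
end

section
/- Let g(x) = max(0, w·x + b) with w ∈ ℝ_+^n and −Σ_i w_i ≤ b < 0, and let r_{I,h}(x) = F(I)·x_h + Σ_{i∈I} w_i x_i where F(J) = Σ_{i∉J} w_i + b, for a pair (I,h) with h ∉ I, F(I) ≥ 0 and F(I∪{h}) < 0. Then r_{I,h}(x) ≥ g(x) for every x ∈ [0,1]^n. -/
/-- each interpolant `r_{I,h}(x) = F(I)·x_h + Σ_{i∈I} w_i x_i` over-estimates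
`g(x) = max(0, w·x + b)` on the unit cube. -/
theorem stmt19 (n : ℕ) (w : Fin n → ℝ) (hw : ∀ i, 0 ≤ w i) (b : ℝ)
    (hb1 : -∑ i, w i ≤ b) (hb2 : b < 0)
    (I : Finset (Fin n)) (h : Fin n) (hhI : h ∉ I)
    (hF : 0 ≤ (∑ i ∈ Iᶜ, w i) + b) (hFh : (∑ i ∈ (insert h I)ᶜ, w i) + b < 0) :
    ∀ x : Fin n → ℝ, (∀ i, 0 ≤ x i ∧ x i ≤ 1) →
      max 0 (∑ i, w i * x i + b) ≤
        ((∑ i ∈ Iᶜ, w i) + b) * x h + ∑ i ∈ I, w i * x i := by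
  intro x hx
  have hxh := hx h
  apply max_le
  · have h1 : 0 ≤ ((∑ i ∈ Iᶜ, w i) + b) * x h := mul_nonneg hF hxh.1
    have h2 : 0 ≤ ∑ i ∈ I, w i * x i :=
      Finset.sum_nonneg fun i _ => mul_nonneg (hw i) (hx i).1
    linarith
  · have hhIc : h ∈ Iᶜ := Finset.mem_compl.mpr hhI
    have hcompl : Iᶜ = insert h ((insert h I)ᶜ) := by
      rw [Finset.compl_insert, Finset.insert_erase hhIc]
    have hnotmem : h ∉ (insert h I)ᶜ := by
      simp [Finset.mem_compl]
    have hsplit : ∑ i, w i * x i = ∑ i ∈ I, w i * x i + ∑ i ∈ Iᶜ, w i * x i :=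
      (Finset.sum_add_sum_compl I _).symm
    have hIc1 : ∑ i ∈ Iᶜ, w i * x i = w h * x h + ∑ i ∈ (insert h I)ᶜ, w i * x i := by
      rw [hcompl, Finset.sum_insert hnotmem]
    have hIc2 : ∑ i ∈ Iᶜ, w i = w h + ∑ i ∈ (insert h I)ᶜ, w i := by
      rw [hcompl, Finset.sum_insert hnotmem]
    have key1 : ∑ i ∈ (insert h I)ᶜ, w i * x i ≤ ∑ i ∈ (insert h I)ᶜ, w i :=
      Finset.sum_le_sum fun i _ => mul_le_of_le_one_right (hw i) (hx i).2
    have key2 : (∑ i ∈ (insert h I)ᶜ, w i) + b ≤ ((∑ i ∈ (insert h I)ᶜ, w i) + b) * x h := by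
      nlinarith [hxh.2, hFh]
    rw [hsplit, hIc1, hIc2]
    nlinarith [key1, key2]
end
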